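/- arXiv:1811.06268 — 2 statements merged into one kernel-verified Lean document; each statement's English description precedes it below -/
import Mathlib

section
/- The set of effective Kontsevich–Zagier periods is closed under addition and multiplication and contains 0 and 1; that is, it is a subring of ℂ. -/
/-!
Volumes of `ℚ`-semi-algebraic sets form a semiring: the product `A × B ⊆ ℝⁿ⁺ᵐ` has volume
`vol A * vol B`, and after padding `A` and `B` with unit cubes to a common dimension `N`, the
disjoint union `A × (0, 1) ∪ B × (1, 2) ⊆ ℝᴺ⁺¹` has volume `vol A + vol B`. Hence differences of
finite such volumes form a subring of `ℝ`, and since the real and imaginary parts of `z + w` and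
`z * w` are ring expressions in those of `z` and `w`, the effective periods form a subring of `ℂ`.
-/

open MeasureTheory

/-- The Boolean algebra of subsets of `ℝⁿ` generated by the sets
`{x | p(x) > 0}` for polynomials `p` with coefficients in `F ⊆ ℝ`. -/
inductive IsSemiAlgebraic (F : Set ℝ) : (n : ℕ) → Set (Fin n → ℝ) → Prop
  | basic (n : ℕ) (p : MvPolynomial (Fin n) ℝ) (hp : ∀ m, MvPolynomial.coeff m p ∈ F) :
      IsSemiAlgebraic F n {x | 0 < MvPolynomial.eval x p}
  | compl (n : ℕ) (s : Set (Fin n → ℝ)) :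
      IsSemiAlgebraic F n s → IsSemiAlgebraic F n sᶜ
  | union (n : ℕ) (s t : Set (Fin n → ℝ)) :
      IsSemiAlgebraic F n s → IsSemiAlgebraic F n t → IsSemiAlgebraic F n (s ∪ t)

/-- The rational numbers, viewed as a subset of `ℝ`. -/
def ratCoeffs : Set ℝ := Set.range ((↑) : ℚ → ℝ)

/-- A real number is a (real) effective Kontsevich–Zagier period if it is a difference
of Lebesgue volumes of two `ℚ`-semi-algebraic subsets of some `ℝⁿ` of finite volume. -/
def IsKZRealPeriod (x : ℝ) : Prop :=
  ∃ (n : ℕ) (A B : Set (Fin n → ℝ)),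
    IsSemiAlgebraic ratCoeffs n A ∧ IsSemiAlgebraic ratCoeffs n B ∧
    volume A < ⊤ ∧ volume B < ⊤ ∧
    x = (volume A).toReal - (volume B).toReal

/-- A complex number is an effective Kontsevich–Zagier period if its real and imaginary
parts both are. -/
def IsEffKZPeriod (z : ℂ) : Prop := IsKZRealPeriod z.re ∧ IsKZRealPeriod z.im

open MvPolynomial Set

namespace IsSemiAlgebraic

variable {F : Set ℝ} {n : ℕ} {s t : Set (Fin n → ℝ)}

theorem measurableSet (h : IsSemiAlgebraic F n s) : MeasurableSet s := by
  induction h with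
  | basic p _ => exact measurableSet_lt measurable_const (continuous_eval p).measurable
  | compl _ _ ih => exact ih.compl
  | union _ _ _ _ ihs iht => exact ihs.union iht

theorem inter (hs : IsSemiAlgebraic F n s) (ht : IsSemiAlgebraic F n t) :
    IsSemiAlgebraic F n (s ∩ t) := by
  rw [← compl_compl (s ∩ t), compl_inter]
  exact .compl _ _ (.union _ _ _ (.compl _ _ hs) (.compl _ _ ht))

theorem empty (hF : 0 ∈ F) : IsSemiAlgebraic F n ∅ := by
  simpa using IsSemiAlgebraic.basic (F := F) n 0 fun _ => by simpa using hF

theorem univ (hF : 0 ∈ F) : IsSemiAlgebraic F n univ := by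
  simpa using (empty (n := n) hF).compl

theorem biInter {ι : Type*} (hF : 0 ∈ F) (I : Finset ι) {s : ι → Set (Fin n → ℝ)}
    (h : ∀ i ∈ I, IsSemiAlgebraic F n (s i)) : IsSemiAlgebraic F n (⋂ i ∈ I, s i) := by
  classical
  induction I using Finset.induction_on with
  | empty => simpa using univ hF
  | insert i I _ ih =>
    rw [Finset.set_biInter_insert]
    exact (h i (I.mem_insert_self i)).inter (ih fun j hj => h j (Finset.mem_insert_of_mem hj))

theorem iInter {ι : Type*} [Fintype ι] (hF : 0 ∈ F) {s : ι → Set (Fin n → ℝ)}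
    (h : ∀ i, IsSemiAlgebraic F n (s i)) : IsSemiAlgebraic F n (⋂ i, s i) := by
  simpa using biInter hF Finset.univ fun i _ => h i

theorem preimage_comp (hF : 0 ∈ F) (h : IsSemiAlgebraic F n s) {k : ℕ} {g : Fin n → Fin k}
    (hg : g.Injective) : IsSemiAlgebraic F k ((· ∘ g) ⁻¹' s) := by
  induction h with
  | basic p hp =>
    have hcoeff (d : Fin k →₀ ℕ) : coeff d (rename g p) ∈ F := by
      by_cases hd : coeff d (rename g p) = 0
      · rw [hd]; exact hF
      · obtain ⟨u, rfl, -⟩ := coeff_rename_ne_zero g p d hd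
        rw [coeff_rename_mapDomain g hg]
        exact hp u
    convert basic k (rename g p) hcoeff using 1
    ext x
    simp [eval_rename]
  | compl _ _ ih => exact ih.compl
  | union _ _ _ _ ihs iht => exact .union _ _ _ ihs iht

end IsSemiAlgebraic

theorem zero_mem_ratCoeffs : (0 : ℝ) ∈ ratCoeffs := ⟨0, Rat.cast_zero⟩

theorem IsSemiAlgebraic.of_rat {n : ℕ} (q : MvPolynomial (Fin n) ℚ) :
    IsSemiAlgebraic ratCoeffs n {x | 0 < eval x (map (algebraMap ℚ ℝ) q)} :=
  .basic n _ fun d => ⟨coeff d q, by simp [coeff_map]⟩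

theorem IsSemiAlgebraic.coord_mem_Ioo {n : ℕ} (i : Fin n) (a b : ℚ) :
    IsSemiAlgebraic ratCoeffs n {x | x i ∈ Ioo (a : ℝ) b} := by
  convert (IsSemiAlgebraic.of_rat (X i - C a)).inter (.of_rat (C b - X i)) using 1
  ext x
  simp [sub_pos]

def openCube (a : ℚ) (n : ℕ) : Set (Fin n → ℝ) :=
  univ.pi fun _ => Ioo (a : ℝ) (a + 1)

theorem isSemiAlgebraic_openCube (a : ℚ) (n : ℕ) :
    IsSemiAlgebraic ratCoeffs n (openCube a n) := by
  rw [openCube, univ_pi_eq_iInter]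
  exact .iInter zero_mem_ratCoeffs fun i => by
    exact_mod_cast IsSemiAlgebraic.coord_mem_Ioo i a (a + 1)

theorem volume_openCube (a : ℚ) (n : ℕ) : volume (openCube a n) = 1 := by
  simp [openCube, volume_pi_pi]

theorem disjoint_openCube_zero_one : Disjoint (openCube 0 1) (openCube 1 1) :=
  disjoint_left.2 fun x h₀ h₁ => by
    have := (h₀ 0 trivial).2
    have := (h₁ 0 trivial).1
    norm_num at *
    linarith

section FinProd

variable {α : Type*} {n m : ℕ}

def finProd (A : Set (Fin n → α)) (B : Set (Fin m → α)) : Set (Fin (n + m) → α) :=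
  {x | x ∘ Fin.castAdd m ∈ A ∧ x ∘ Fin.natAdd n ∈ B}

theorem finProd_disjoint_right {A A' : Set (Fin n → α)} {B B' : Set (Fin m → α)}
    (h : Disjoint B B') : Disjoint (finProd A B) (finProd A' B') :=
  disjoint_left.2 fun _ hx hx' => disjoint_left.1 h hx.2 hx'.2

theorem IsSemiAlgebraic.finProd {F : Set ℝ} (hF : 0 ∈ F) {A : Set (Fin n → ℝ)}
    {B : Set (Fin m → ℝ)} (hA : IsSemiAlgebraic F n A) (hB : IsSemiAlgebraic F m B) :
    IsSemiAlgebraic F (n + m) (finProd A B) :=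
  (hA.preimage_comp hF (Fin.castAdd_injective n m)).inter
    (hB.preimage_comp hF (Fin.natAdd_injective m n))

section Measurable

variable [MeasurableSpace α]

variable (α n m) in
def MeasurableEquiv.finAppend : ((Fin n → α) × (Fin m → α)) ≃ᵐ (Fin (n + m) → α) :=
  (MeasurableEquiv.sumPiEquivProdPi fun _ => α).symm.trans
    (MeasurableEquiv.piCongrLeft (fun _ => α) finSumFinEquiv)

theorem MeasurableEquiv.finAppend_apply (p : (Fin n → α) × (Fin m → α)) :
    finAppend α n m p = Fin.append p.1 p.2 := by
  funext i
  refine Fin.addCases (fun j => ?_) (fun j => ?_) i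
  · rw [Fin.append_left, ← finSumFinEquiv_apply_left]
    exact Equiv.piCongrLeft_sumInl (fun _ => α) finSumFinEquiv p.1 p.2 j
  · rw [Fin.append_right, ← finSumFinEquiv_apply_right]
    exact Equiv.piCongrLeft_sumInr (fun _ => α) finSumFinEquiv p.1 p.2 j

theorem MeasurableEquiv.preimage_finAppend_finProd (A : Set (Fin n → α))
    (B : Set (Fin m → α)) :
    finAppend α n m ⁻¹' finProd A B = A ×ˢ B := by
  ext ⟨a, b⟩
  simp [finProd, finAppend_apply, Function.comp_def]

end Measurable

theorem volume_finProd [MeasureSpace α] [SigmaFinite (volume : Measure α)]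
    (A : Set (Fin n → α)) (B : Set (Fin m → α)) :
    volume (finProd A B) = volume A * volume B := by
  have hpres : MeasurePreserving (MeasurableEquiv.finAppend α n m) volume volume :=
    (volume_measurePreserving_piCongrLeft (fun _ => α) finSumFinEquiv).comp
      (volume_measurePreserving_sumPiEquivProdPi_symm fun _ => α)
  rw [← hpres.measure_preimage_equiv, MeasurableEquiv.preimage_finAppend_finProd,
    Measure.volume_eq_prod, Measure.prod_prod]

end FinProd

open scoped ENNReal

def IsSemiAlgebraicVolume (v : ℝ≥0∞) : Prop :=
  ∃ (n : ℕ) (A : Set (Fin n → ℝ)), IsSemiAlgebraic ratCoeffs n A ∧ volume A = v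

namespace IsSemiAlgebraicVolume

theorem zero : IsSemiAlgebraicVolume 0 :=
  ⟨0, ∅, .empty zero_mem_ratCoeffs, measure_empty⟩

theorem one : IsSemiAlgebraicVolume 1 :=
  ⟨0, openCube 0 0, isSemiAlgebraic_openCube 0 0, volume_openCube 0 0⟩

theorem mul {a b : ℝ≥0∞} (ha : IsSemiAlgebraicVolume a) (hb : IsSemiAlgebraicVolume b) :
    IsSemiAlgebraicVolume (a * b) := by
  obtain ⟨n, A, hA, rfl⟩ := ha
  obtain ⟨m, B, hB, rfl⟩ := hb
  exact ⟨n + m, finProd A B, hA.finProd zero_mem_ratCoeffs hB, volume_finProd A B⟩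

theorem exists_common_dim {a b : ℝ≥0∞} (ha : IsSemiAlgebraicVolume a)
    (hb : IsSemiAlgebraicVolume b) :
    ∃ (N : ℕ) (A B : Set (Fin N → ℝ)), IsSemiAlgebraic ratCoeffs N A ∧
      IsSemiAlgebraic ratCoeffs N B ∧ volume A = a ∧ volume B = b := by
  obtain ⟨n, A, hA, rfl⟩ := ha
  obtain ⟨m, B, hB, rfl⟩ := hb
  refine ⟨n + m, finProd A (openCube 0 m), finProd (openCube 0 n) B,
    hA.finProd zero_mem_ratCoeffs (isSemiAlgebraic_openCube 0 m),
    (isSemiAlgebraic_openCube 0 n).finProd zero_mem_ratCoeffs hB, ?_, ?_⟩ <;>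
  simp [volume_finProd, volume_openCube]

theorem add {a b : ℝ≥0∞} (ha : IsSemiAlgebraicVolume a) (hb : IsSemiAlgebraicVolume b) :
    IsSemiAlgebraicVolume (a + b) := by
  obtain ⟨N, A, B, hA, hB, rfl, rfl⟩ := exists_common_dim ha hb
  have hA' := hA.finProd zero_mem_ratCoeffs (isSemiAlgebraic_openCube 0 1)
  have hB' := hB.finProd zero_mem_ratCoeffs (isSemiAlgebraic_openCube 1 1)
  refine ⟨N + 1, finProd A (openCube 0 1) ∪ finProd B (openCube 1 1), .union _ _ _ hA' hB', ?_⟩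
  rw [measure_union (finProd_disjoint_right disjoint_openCube_zero_one) hB'.measurableSet]
  simp [volume_finProd, volume_openCube]

end IsSemiAlgebraicVolume

theorem isKZRealPeriod_iff {x : ℝ} :
    IsKZRealPeriod x ↔ ∃ a b : ℝ≥0∞, IsSemiAlgebraicVolume a ∧ IsSemiAlgebraicVolume b ∧
      a < ⊤ ∧ b < ⊤ ∧ x = a.toReal - b.toReal := by
  constructor
  · rintro ⟨n, A, B, hA, hB, hAv, hBv, rfl⟩
    exact ⟨_, _, ⟨n, A, hA, rfl⟩, ⟨n, B, hB, rfl⟩, hAv, hBv, rfl⟩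
  · rintro ⟨a, b, ha, hb, hav, hbv, rfl⟩
    obtain ⟨N, A, B, hA, hB, rfl, rfl⟩ := ha.exists_common_dim hb
    exact ⟨N, A, B, hA, hB, hav, hbv, rfl⟩

namespace IsKZRealPeriod

theorem zero : IsKZRealPeriod 0 :=
  isKZRealPeriod_iff.2 ⟨0, 0, .zero, .zero, by simp, by simp, by simp⟩

theorem one : IsKZRealPeriod 1 :=
  isKZRealPeriod_iff.2 ⟨1, 0, .one, .zero, by simp, by simp, by simp⟩

theorem neg {x : ℝ} (hx : IsKZRealPeriod x) : IsKZRealPeriod (-x) := by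
  obtain ⟨n, A, B, hA, hB, hAv, hBv, rfl⟩ := hx
  exact ⟨n, B, A, hB, hA, hBv, hAv, by ring⟩

theorem add {x y : ℝ} (hx : IsKZRealPeriod x) (hy : IsKZRealPeriod y) :
    IsKZRealPeriod (x + y) := by
  obtain ⟨a, b, ha, hb, hav, hbv, rfl⟩ := isKZRealPeriod_iff.1 hx
  obtain ⟨c, d, hc, hd, hcv, hdv, rfl⟩ := isKZRealPeriod_iff.1 hy
  refine isKZRealPeriod_iff.2 ⟨a + c, b + d, ha.add hc, hb.add hd,
    ENNReal.add_lt_top.2 ⟨hav, hcv⟩, ENNReal.add_lt_top.2 ⟨hbv, hdv⟩, ?_⟩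
  rw [ENNReal.toReal_add hav.ne hcv.ne, ENNReal.toReal_add hbv.ne hdv.ne]
  ring

-- `(a - b)(c - d) = (ac + bd) - (ad + bc)`
theorem mul {x y : ℝ} (hx : IsKZRealPeriod x) (hy : IsKZRealPeriod y) :
    IsKZRealPeriod (x * y) := by
  obtain ⟨a, b, ha, hb, hav, hbv, rfl⟩ := isKZRealPeriod_iff.1 hx
  obtain ⟨c, d, hc, hd, hcv, hdv, rfl⟩ := isKZRealPeriod_iff.1 hy
  refine isKZRealPeriod_iff.2 ⟨a * c + b * d, a * d + b * c,
    (ha.mul hc).add (hb.mul hd), (ha.mul hd).add (hb.mul hc), by finiteness, by finiteness, ?_⟩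
  rw [ENNReal.toReal_add (by finiteness) (by finiteness),
    ENNReal.toReal_add (by finiteness) (by finiteness)]
  simp only [ENNReal.toReal_mul]
  ring

end IsKZRealPeriod

namespace IsEffKZPeriod

theorem zero : IsEffKZPeriod 0 := ⟨IsKZRealPeriod.zero, IsKZRealPeriod.zero⟩

theorem one : IsEffKZPeriod 1 := ⟨by simpa using IsKZRealPeriod.one, IsKZRealPeriod.zero⟩

theorem neg {z : ℂ} (hz : IsEffKZPeriod z) : IsEffKZPeriod (-z) :=
  ⟨hz.1.neg, hz.2.neg⟩

theorem add {z w : ℂ} (hz : IsEffKZPeriod z) (hw : IsEffKZPeriod w) : IsEffKZPeriod (z + w) :=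
  ⟨hz.1.add hw.1, hz.2.add hw.2⟩

theorem mul {z w : ℂ} (hz : IsEffKZPeriod z) (hw : IsEffKZPeriod w) : IsEffKZPeriod (z * w) := by
  constructor
  · rw [Complex.mul_re, sub_eq_add_neg]
    exact (hz.1.mul hw.1).add (hz.2.mul hw.2).neg
  · rw [Complex.mul_im]
    exact (hz.1.mul hw.2).add (hz.2.mul hw.1)

end IsEffKZPeriod

def effKZPeriodSubring : Subring ℂ where
  carrier := {z | IsEffKZPeriod z}
  zero_mem' := .zero
  one_mem' := .one
  add_mem' := .add
  mul_mem' := .mul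
  neg_mem' := .neg

/-- The set of effective Kontsevich–Zagier periods contains `0` and `1` and is closed
under addition and multiplication; indeed it is a subring of `ℂ`. -/
theorem effKZPeriods_subring :
    IsEffKZPeriod 0 ∧ IsEffKZPeriod 1 ∧
    (∀ z w : ℂ, IsEffKZPeriod z → IsEffKZPeriod w → IsEffKZPeriod (z + w)) ∧
    (∀ z w : ℂ, IsEffKZPeriod z → IsEffKZPeriod w → IsEffKZPeriod (z * w)) ∧
    ∃ R : Subring ℂ, (R : Set ℂ) = {z : ℂ | IsEffKZPeriod z} :=
  ⟨.zero, .one, fun _ _ => .add, fun _ _ => .mul, effKZPeriodSubring, rfl⟩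
end

section
/- Galois theory in torsor form, finite level: let K ⊆ ℚ̄ be a finite Galois extension of ℚ inside a fixed algebraic closure ℚ̄ of ℚ. Then the map K ⊗_ℚ ℚ̄ → Maps(Gal(K/ℚ), ℚ̄), sending λ ⊗ a to the function g ↦ a·g(λ) (where g(λ) ∈ K ⊆ ℚ̄), is an isomorphism of ℚ̄-algebras; here Maps(Gal(K/ℚ), ℚ̄) is the ℚ̄-algebra of all ℚ̄-valued functions on the finite group Gal(K/ℚ) with pointwise operations. -/
/-!
Over `Ω` the map `Ω ⊗_F E → Ω^ι`, `a ⊗ x ↦ (a · σᵢ(x))ᵢ`, is `Ω`-linear and its image contains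
the vectors `(σᵢ(x))ᵢ`. These span `Ω^ι`, since a linear form vanishing on all of them is a linear
relation among the characters `σᵢ`, which Dedekind's lemma excludes. Both sides have dimension
`[E : F] = |ι|`, so the map is bijective. For `E = K` Galois over `ℚ`, the embeddings
`K → K ⊆ ℚ̄` indexed by `Gal(K/ℚ)` are `[K : ℚ]` in number.
-/

open TensorProduct
open Function
open Module (finrank finrank_baseChange finrank_fintype_fun_eq_card)

variable {F E Ω ι : Type*} [Field F] [Ring E] [Field Ω] [Algebra F E] [Algebra F Ω]

noncomputable def AlgHom.baseChangeToPi (σ : ι → E →ₐ[F] Ω) : Ω ⊗[F] E →ₐ[Ω] (ι → Ω) :=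
  AlgHom.liftEquiv F Ω E (ι → Ω) (AlgHom.pi σ)

@[simp]
lemma AlgHom.baseChangeToPi_tmul (σ : ι → E →ₐ[F] Ω) (a : Ω) (x : E) (i : ι) :
    baseChangeToPi σ (a ⊗ₜ x) i = a * σ i x :=
  rfl

lemma AlgHom.linearIndependent_coeFn {σ : ι → E →ₐ[F] Ω} (hσ : Injective σ) :
    LinearIndependent Ω fun i ↦ ⇑(σ i) :=
  (linearIndependent_monoidHom E Ω).comp (fun i ↦ (σ i : E →* Ω))
    fun _ _ h ↦ hσ (AlgHom.coe_monoidHom_injective h)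

variable [_root_.Finite ι]

lemma AlgHom.baseChangeToPi_surjective {σ : ι → E →ₐ[F] Ω} (hσ : Injective σ) :
    Surjective (baseChangeToPi σ) := by
  have hspan : Submodule.span Ω (Set.range fun x i ↦ σ i x) = ⊤ :=
    span_flip_eq_top_iff_linearIndependent.mpr (linearIndependent_coeFn hσ)
  rw [← AlgHom.coe_toLinearMap, ← LinearMap.range_eq_top, eq_top_iff, ← hspan,
    Submodule.span_le]
  rintro _ ⟨x, rfl⟩
  exact ⟨1 ⊗ₜ x, funext fun i ↦ one_mul (σ i x)⟩

lemma AlgHom.baseChangeToPi_bijective [FiniteDimensional F E] {σ : ι → E →ₐ[F] Ω}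
    (hσ : Injective σ) (hcard : Nat.card ι = finrank F E) :
    Bijective (baseChangeToPi σ) := by
  have : Fintype ι := Fintype.ofFinite ι
  have hrank : finrank Ω (Ω ⊗[F] E) = finrank Ω (ι → Ω) := by
    rw [finrank_baseChange, finrank_fintype_fun_eq_card, ← Nat.card_eq_fintype_card, hcard]
  have hsurj := baseChangeToPi_surjective hσ
  exact ⟨(LinearMap.injective_iff_surjective_of_finrank_eq_finrank hrank
    (f := (baseChangeToPi σ).toLinearMap)).mpr hsurj, hsurj⟩

/-- Galois theory in torsor form, finite level: for a finite Galois subextension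
`K ⊆ ℚ̄` of `ℚ`, the map `K ⊗_ℚ ℚ̄ → Maps(Gal(K/ℚ), ℚ̄)`, `λ ⊗ a ↦ (g ↦ a·g(λ))`
(with `g(λ) ∈ K ⊆ ℚ̄`), is an isomorphism of `ℚ̄`-algebras. -/
theorem galois_torsor_finite_level
    (K : IntermediateField ℚ (AlgebraicClosure ℚ))
    [FiniteDimensional ℚ K] [IsGalois ℚ K] :
    ∃ Φ : (K ⊗[ℚ] (AlgebraicClosure ℚ)) →ₐ[ℚ] ((K ≃ₐ[ℚ] K) → AlgebraicClosure ℚ),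
      (∀ (l : K) (a : AlgebraicClosure ℚ) (g : K ≃ₐ[ℚ] K),
        Φ (l ⊗ₜ[ℚ] a) g = a * algebraMap K (AlgebraicClosure ℚ) (g l)) ∧
      Function.Bijective Φ := by
  let σ : (K ≃ₐ[ℚ] K) → K →ₐ[ℚ] AlgebraicClosure ℚ := fun g ↦ K.val.comp g.toAlgHom
  have hσ : Injective σ := fun g h hgh ↦
    AlgEquiv.ext fun l ↦ K.val.injective (DFunLike.congr_fun hgh l :)
  refine ⟨((AlgHom.baseChangeToPi σ).restrictScalars ℚ).comp
      (Algebra.TensorProduct.comm ℚ K (AlgebraicClosure ℚ)).toAlgHom,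
    fun l a g ↦ AlgHom.baseChangeToPi_tmul σ a l g, ?_⟩
  exact (AlgHom.baseChangeToPi_bijective hσ (IsGalois.card_aut_eq_finrank ℚ K)).comp
    (Algebra.TensorProduct.comm ℚ K _).bijective
end
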